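/- Let (X, d) be a metric space with at least three points, u = underline(d), and d⁻ the pseudometric on X defined by d⁻(x, x) = 0 and d⁻(x, y) = d(x, y) − u(x) − u(y) for x ≠ y. Then the map Φ(g) = g + u (i.e., Φ(g)(x) = g(x) + u(x)) is a bijection from T(X, d⁻) onto the set {f ∈ T(X, d) : f(x) ≥ u(x) for all x ∈ X}, and it preserves the sup-distance: d_T(Φ(g), Φ(h)) = d_T(g, h) for all g, h ∈ T(X, d⁻). -/

import Mathlib

open scoped Classical

/-- The Gromov product `d(x; y, z) = (d(x,y) + d(x,z) - d(y,z))/2`. -/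
noncomputable def gromov {X : Type*} (d : X → X → ℝ) (x y z : X) : ℝ :=
  (d x y + d x z - d y z) / 2

/-- `underline d x` is the infimum of the Gromov products `d(x; y, z)` over all
pairs of distinct points `y, z` different from `x`. -/
noncomputable def underline {X : Type*} (d : X → X → ℝ) (x : X) : ℝ :=
  sInf {r : ℝ | ∃ y z : X, y ≠ x ∧ z ≠ x ∧ y ≠ z ∧ r = gromov d x y z}

/-- The drifted map `d_δ`: `d_δ(x,x) = 0` and `d_δ(x,y) = d(x,y) - δ(x) - δ(y)` for `x ≠ y`. -/
noncomputable def drift {X : Type*} (d : X → X → ℝ) (δ : X → ℝ) (x y : X) : ℝ :=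
  if x = y then 0 else d x y - δ x - δ y

/-- The tight span of a pseudometric `d` on `X`. -/
def TightSpan {X : Type*} (d : X → X → ℝ) : Set (X → ℝ) :=
  {f | (∀ x, 0 ≤ f x) ∧ (∀ x y, d x y ≤ f x + f y) ∧
    ∀ x, ∀ ε : ℝ, 0 < ε → ∃ y, f x + f y ≤ d x y + ε}

/-- The sup-distance on the tight span: `dT f g = sup_x |f x - g x|`. -/
noncomputable def dT {X : Type*} (f g : X → ℝ) : ℝ :=
  ⨆ x, |f x - g x|

/-! `g ↦ g + u` is a translation of `X → ℝ`, so it is injective and preserves sup-distances; the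
content is that it matches the two tight spans. Off the diagonal `d⁻(x, y) = d(x, y) - u x - u y`,
so condition (i) and off-diagonal witnesses in (ii) transfer directly. A diagonal witness `y = x`
for `g` (i.e. `g x ≤ ε / 2`) is replaced by any other point `p`, using that elements of the tight
span of a pseudometric are `1`-Lipschitz. That `d⁻` is a pseudometric is where `u = underline d`
enters: `u y ≤ d(y; x, z)` is exactly the triangle inequality `d⁻(x, z) ≤ d⁻(x, y) + d⁻(y, z)`
for distinct `x, y, z`. -/

section TightSpan

variable {X : Type*} {e : X → X → ℝ} {g : X → ℝ}

theorem le_add_of_mem_tightSpan (hsymm : ∀ x y, e x y = e y x)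
    (htri : ∀ x y z, e x z ≤ e x y + e y z) (hg : g ∈ TightSpan e) (x p : X) :
    g p ≤ g x + e x p := by
  refine le_of_forall_pos_le_add fun ε hε => ?_
  obtain ⟨r, hr⟩ := hg.2.2 p ε hε
  linarith [hg.2.1 x r, htri p x r, hsymm p x]

end TightSpan

section Drift

variable {X : Type*} {d : X → X → ℝ} {δ : X → ℝ} {g : X → ℝ} {x y : X}

theorem drift_self : drift d δ x x = 0 := if_pos rfl

theorem drift_of_ne (h : x ≠ y) : drift d δ x y = d x y - δ x - δ y := if_neg h

theorem drift_comm (hsymm : ∀ x y, d x y = d y x) : drift d δ x y = drift d δ y x := by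
  by_cases h : x = y
  · rw [h]
  · rw [drift_of_ne h, drift_of_ne (Ne.symm h), hsymm]
    ring

theorem sub_sub_le_drift (hd : ∀ x, d x x = 0) (hδ : ∀ x, 0 ≤ δ x) (x y : X) :
    d x y - δ x - δ y ≤ drift d δ x y := by
  by_cases h : x = y
  · subst h
    rw [drift_self, hd]
    linarith [hδ x]
  · rw [drift_of_ne h]

theorem add_mem_tightSpan_of_mem_drift (hd : ∀ x, d x x = 0) (hδ : ∀ x, 0 ≤ δ x)
    (hsymm : ∀ x y, d x y = d y x)
    (htri : ∀ x y z, drift d δ x z ≤ drift d δ x y + drift d δ y z)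
    (hne : ∀ x : X, ∃ p, p ≠ x) (hg : g ∈ TightSpan (drift d δ)) :
    (fun x => g x + δ x) ∈ TightSpan d := by
  obtain ⟨hg0, hg1, hg2⟩ := hg
  refine ⟨fun x => add_nonneg (hg0 x) (hδ x), fun x y => ?_, fun x ε hε => ?_⟩
  · linarith [hg1 x y, sub_sub_le_drift hd hδ x y]
  obtain ⟨y, hy⟩ := hg2 x ε hε
  by_cases hyx : y = x
  · obtain ⟨p, hp⟩ := hne x
    have hlip := le_add_of_mem_tightSpan (fun _ _ => drift_comm hsymm) htri ⟨hg0, hg1, hg2⟩ x p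
    rw [hyx, drift_self] at hy
    rw [drift_of_ne (Ne.symm hp)] at hlip
    exact ⟨p, by linarith⟩
  · rw [drift_of_ne (Ne.symm hyx)] at hy
    exact ⟨y, by linarith⟩

theorem sub_mem_tightSpan_drift (hd : ∀ x, d x x = 0) (hδ : ∀ x, 0 ≤ δ x)
    {f : X → ℝ} (hf : f ∈ TightSpan d) (hδf : ∀ x, δ x ≤ f x) :
    (fun x => f x - δ x) ∈ TightSpan (drift d δ) := by
  obtain ⟨-, hf1, hf2⟩ := hf
  refine ⟨fun x => sub_nonneg.2 (hδf x), fun x y => ?_, fun x ε hε => ?_⟩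
  · by_cases h : x = y
    · subst h
      rw [drift_self]
      linarith [hδf x]
    · rw [drift_of_ne h]
      linarith [hf1 x y]
  · obtain ⟨y, hy⟩ := hf2 x ε hε
    exact ⟨y, by linarith [sub_sub_le_drift hd hδ x y]⟩

end Drift

theorem exists_ne_ne {X : Type*} (h3 : ∃ a b c : X, a ≠ b ∧ a ≠ c ∧ b ≠ c) (x y : X) :
    ∃ z : X, z ≠ x ∧ z ≠ y := by
  obtain ⟨a, b, c, hab, hac, hbc⟩ := h3
  by_contra! h
  rcases eq_or_ne a x with rfl | ha
  · exact hbc ((h b hab.symm).trans (h c hac.symm).symm)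
  rcases eq_or_ne b x with rfl | hb
  · exact hac ((h a hab).trans (h c hbc.symm).symm)
  · exact hab ((h a ha).trans (h b hb).symm)

section Underline

variable {X : Type*} [MetricSpace X]

theorem gromov_dist_nonneg (x y z : X) : 0 ≤ gromov (fun a b => dist a b) x y z := by
  unfold gromov
  linarith [dist_triangle y x z, dist_comm y x]

theorem underline_dist_nonneg (x : X) : 0 ≤ underline (fun a b => dist a b) x :=
  Real.sInf_nonneg <| by
    rintro r ⟨y, z, -, -, -, rfl⟩
    exact gromov_dist_nonneg x y z

theorem underline_dist_le_gromov {x y z : X} (hy : y ≠ x) (hz : z ≠ x) (hyz : y ≠ z) :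
    underline (fun a b => dist a b) x ≤ gromov (fun a b => dist a b) x y z :=
  csInf_le ⟨0, by rintro r ⟨y, z, -, -, -, rfl⟩; exact gromov_dist_nonneg x y z⟩
    ⟨y, z, hy, hz, hyz, rfl⟩

theorem underline_add_underline_le_dist (h3 : ∃ a b c : X, a ≠ b ∧ a ≠ c ∧ b ≠ c)
    {x y : X} (hxy : x ≠ y) :
    underline (fun a b => dist a b) x + underline (fun a b => dist a b) y ≤ dist x y := by
  obtain ⟨z, hzx, hzy⟩ := exists_ne_ne h3 x y
  have hx := underline_dist_le_gromov hxy.symm hzx hzy.symm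
  have hy := underline_dist_le_gromov hxy hzy hzx.symm
  unfold gromov at hx hy
  linarith [dist_comm x y]

theorem drift_underline_nonneg (h3 : ∃ a b c : X, a ≠ b ∧ a ≠ c ∧ b ≠ c) (x y : X) :
    0 ≤ drift (fun a b => dist a b) (underline (fun a b => dist a b)) x y := by
  by_cases h : x = y
  · rw [h, drift_self]
  · rw [drift_of_ne h]
    linarith [underline_add_underline_le_dist h3 h]

theorem drift_underline_triangle (h3 : ∃ a b c : X, a ≠ b ∧ a ≠ c ∧ b ≠ c) (x y z : X) :
    drift (fun a b => dist a b) (underline (fun a b => dist a b)) x z ≤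
      drift (fun a b => dist a b) (underline (fun a b => dist a b)) x y +
        drift (fun a b => dist a b) (underline (fun a b => dist a b)) y z := by
  by_cases hxz : x = z
  · rw [hxz, drift_self]
    exact add_nonneg (drift_underline_nonneg h3 _ _) (drift_underline_nonneg h3 _ _)
  by_cases hxy : x = y
  · rw [hxy, drift_self, zero_add]
  by_cases hyz : y = z
  · rw [hyz, drift_self, add_zero]
  have hg := underline_dist_le_gromov hxy (Ne.symm hyz) hxz
  unfold gromov at hg
  rw [drift_of_ne hxz, drift_of_ne hxy, drift_of_ne hyz]
  linarith [dist_comm y x]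

end Underline

theorem stmt16 {X : Type*} [MetricSpace X]
    (h3 : ∃ a b c : X, a ≠ b ∧ a ≠ c ∧ b ≠ c)
    (u : X → ℝ) (hu : u = underline (fun a b => dist a b))
    (dminus : X → X → ℝ) (hdminus : dminus = drift (fun a b => dist a b) u) :
    (∀ g ∈ TightSpan dminus,
        (fun x => g x + u x) ∈ TightSpan (fun a b : X => dist a b) ∧
        ∀ x, u x ≤ g x + u x) ∧
    (∀ g ∈ TightSpan dminus, ∀ h ∈ TightSpan dminus,
        (fun x => g x + u x) = (fun x => h x + u x) → g = h) ∧
    (∀ f ∈ TightSpan (fun a b : X => dist a b), (∀ x, u x ≤ f x) →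
        ∃ g ∈ TightSpan dminus, f = fun x => g x + u x) ∧
    (∀ g ∈ TightSpan dminus, ∀ h ∈ TightSpan dminus,
        dT (fun x => g x + u x) (fun x => h x + u x) = dT g h) := by
  subst hu hdminus
  have hd : ∀ x : X, dist x x = 0 := dist_self
  refine ⟨fun g hg => ⟨?_, fun x => le_add_of_nonneg_left (hg.1 x)⟩, ?_, ?_, ?_⟩
  · exact add_mem_tightSpan_of_mem_drift hd underline_dist_nonneg dist_comm
      (drift_underline_triangle h3) (fun x => (exists_ne_ne h3 x x).imp fun _ h => h.1) hg
  · exact fun g _ h _ hgh => funext fun x => add_right_cancel (congrFun hgh x)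
  · exact fun f hf hδf => ⟨_, sub_mem_tightSpan_drift hd underline_dist_nonneg hf hδf,
      funext fun x => (sub_add_cancel _ _).symm⟩
  · intro g _ h _
    simp only [dT, add_sub_add_right_eq_sub]
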